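/- Let G be a locally compact Hausdorff abelian topological group, K a compact neighbourhood of 0 in G, and η : G → ℂ positive definite with η(0) > 0 such that Δ := {z ∈ G : η(z) ≠ 0} is uniformly discrete in G. For t ∈ G define N(t) := sup_{x ∈ G} ∑_{z ∈ (Δ ∪ (t + Δ)) ∩ (x + K)} |η(z − t) − η(z)| (each sum is over a finite set of uniformly bounded cardinality, so N(t) is a finite real number; N(t) is the K-norm of δ_t * γ − γ for the autocorrelation measure γ = ∑_{z∈Δ} η(z) δ_z). Then the following are equivalent: (i) for every ε > 0 the set {t ∈ G : N(t) < ε} is relatively dense in G (norm almost periodicity of γ); (ii) for every ε > 0 the set P_ε = {t ∈ G : |1 − η(t)/η(0)|^{1/2} < ε} is relatively dense in G. -/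

import Mathlib

/-!
Positive definiteness gives `‖η (z - t) - η z‖² ≤ 2 η(0) ‖η 0 - η t‖ = 2 (η(0) ρ(t,0))²`, and
uniform discreteness bounds the number of terms of every sum defining `N(t)` by a constant `n`,
so `N(t) ≤ 2 n η(0) ρ(t,0)`. Conversely, the single term `z = t` of the sum at `x = t` is
`‖η 0 - η t‖ = η(0) ρ(t,0)²`, so `η(0) ρ(t,0)² ≤ N(t)`. Each family of sets of almost periods
therefore contains a member of the other, and relative density passes to supersets.
-/

open scoped Pointwise

/-- A function `η : G → ℂ` on an additive abelian group is positive definite if all the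
finite double sums `∑ i, ∑ j, c i * conj (c j) * η (x i - x j)` are nonnegative reals. -/
def IsPositiveDefiniteFn {G : Type*} [AddCommGroup G] (η : G → ℂ) : Prop :=
  ∀ (N : ℕ) (x : Fin N → G) (c : Fin N → ℂ),
    ∃ r : ℝ, 0 ≤ r ∧ ∑ i, ∑ j, c i * (starRingEnd ℂ) (c j) * η (x i - x j) = (r : ℂ)

/-- The autocorrelation pseudometric `ρ(s,t) = |1 − η(s−t)/η(0)|^{1/2}`. -/
noncomputable def acRho {G : Type*} [AddCommGroup G] (η : G → ℂ) (s t : G) : ℝ :=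
  Real.sqrt (‖1 - η (s - t) / η 0‖)

/-- The set of `ε`-almost periods `P_ε = {t : ρ(t,0) < ε}`. -/
noncomputable def almostPeriods {G : Type*} [AddCommGroup G] (η : G → ℂ) (ε : ℝ) : Set G :=
  {t : G | acRho η t 0 < ε}

/-- A subset `P` of a topological abelian group is relatively dense if `P + K = G`
for some compact `K`. -/
def RelativelyDense {G : Type*} [AddCommGroup G] [TopologicalSpace G] (P : Set G) : Prop :=
  ∃ K : Set G, IsCompact K ∧ P + K = Set.univ

/-- A subset `P` of a topological abelian group is uniformly discrete if there is an open
neighbourhood `V` of `0` such that `(t + V) ∩ P = {t}` for every `t ∈ P`. -/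
def UniformlyDiscrete {G : Type*} [AddCommGroup G] [TopologicalSpace G] (P : Set G) : Prop :=
  ∃ V : Set G, IsOpen V ∧ (0 : G) ∈ V ∧ ∀ t ∈ P, ({t} + V) ∩ P = {t}

/-- The `K`-norm `‖δ_t * γ − γ‖_K` of the difference between the autocorrelation
`γ = ∑_{z ∈ Δ} η(z) δ_z` and its translate by `t`:
`N(t) = sup_x ∑_{z ∈ (Δ ∪ (t+Δ)) ∩ (x+K)} |η(z−t) − η(z)|`. -/
noncomputable def autocorrKNorm {G : Type*} [AddCommGroup G] [TopologicalSpace G]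
    (η : G → ℂ) (K : Set G) (t : G) : ℝ :=
  ⨆ x : G, ∑' z : ↥(({z : G | η z ≠ 0} ∪ ({t} + {z : G | η z ≠ 0})) ∩ ({x} + K)),
    ‖η ((z : G) - t) - η (z : G)‖

open Function ComplexConjugate

theorem RelativelyDense.mono {G : Type*} [AddCommGroup G] [TopologicalSpace G] {P Q : Set G}
    (hP : RelativelyDense P) (hPQ : P ⊆ Q) : RelativelyDense Q := by
  obtain ⟨C, hC, hPC⟩ := hP
  exact ⟨C, hC, Set.eq_univ_of_univ_subset (hPC ▸ Set.add_subset_add_right hPQ)⟩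

theorem Set.Finite.tsum_le_mul_of_ncard_le {α : Type*} {s : Set α} (hs : s.Finite) {n : ℕ}
    (hn : s.ncard ≤ n) {f : α → ℝ} {b : ℝ} (hb : 0 ≤ b) (hf : ∀ a ∈ s, f a ≤ b) :
    ∑' a : s, f a ≤ n * b := by
  have := hs.fintype
  calc ∑' a : s, f a ≤ Fintype.card s • b := by
        rw [tsum_fintype]
        exact Finset.sum_le_card_nsmul _ _ _ fun a _ => hf a a.2
    _ ≤ n * b := by
        rw [nsmul_eq_mul, ← Set.toFinset_card, ← Set.ncard_eq_toFinset_card']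
        gcongr

theorem Set.singleton_add_inter_singleton_add {G : Type*} [AddCommGroup G] (Δ K : Set G) (t x : G) :
    ({t} + Δ) ∩ ({x} + K) = (t + ·) '' (Δ ∩ ({x - t} + K)) := by
  simp only [Set.singleton_add, Set.image_inter (add_right_injective t), Set.image_image]
  congr 2
  funext y
  abel

section UniformlyDiscrete

variable {G : Type*} [AddCommGroup G] [TopologicalSpace G] [IsTopologicalAddGroup G] {Δ K : Set G}

theorem UniformlyDiscrete.exists_ncard_inter_translate_le (hud : UniformlyDiscrete Δ)
    (hK : IsCompact K) : ∃ n : ℕ, ∀ x : G, (Δ ∩ ({x} + K)).Finite ∧ (Δ ∩ ({x} + K)).ncard ≤ n := by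
  obtain ⟨V, hVo, hV0, hsep⟩ := hud
  obtain ⟨W, hW0, hWV⟩ := exists_nhds_half_neg (hVo.mem_nhds hV0)
  have hsub : ∀ c : G, (Δ ∩ ({c} + W)).Subsingleton := by
    rintro c p ⟨hpΔ, hpW⟩ q ⟨hqΔ, hqW⟩
    rw [Set.singleton_add] at hpW hqW
    obtain ⟨v, hv, rfl⟩ := hpW
    obtain ⟨w, hw, rfl⟩ := hqW
    have hq : c + w ∈ ({c + v} + V) ∩ Δ :=
      ⟨Set.mem_add.2 ⟨c + v, rfl, w - v, hWV w hw v hv, by abel⟩, hqΔ⟩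
    rwa [hsep _ hpΔ, Set.mem_singleton_iff, eq_comm] at hq
  obtain ⟨T, -, hT⟩ := hK.elim_nhds_subcover (fun k => {k} + W)
    fun k _ => singleton_add_mem_nhds_of_nhds_zero k hW0
  have hcover : ∀ x, Δ ∩ ({x} + K) ⊆ ⋃ k ∈ T, Δ ∩ ({x + k} + W) := by
    rintro x p ⟨hpΔ, hpK⟩
    obtain ⟨x, rfl, y, hy, rfl⟩ := Set.mem_add.1 hpK
    obtain ⟨k, hk, hyk⟩ := Set.mem_iUnion₂.1 (hT hy)
    obtain ⟨k, rfl, w, hw, rfl⟩ := Set.mem_add.1 hyk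
    exact Set.mem_iUnion₂.2 ⟨k, hk, hpΔ, Set.mem_add.2 ⟨x + k, rfl, w, hw, by abel⟩⟩
  refine ⟨T.card, fun x => ?_⟩
  have hfin : (⋃ k ∈ T, Δ ∩ ({x + k} + W)).Finite :=
    T.finite_toSet.biUnion fun k _ => (hsub _).finite
  refine ⟨hfin.subset (hcover x), ?_⟩
  calc (Δ ∩ ({x} + K)).ncard ≤ (⋃ k ∈ T, Δ ∩ ({x + k} + W)).ncard :=
        Set.ncard_le_ncard (hcover x) hfin
    _ ≤ ∑ k ∈ T, (Δ ∩ ({x + k} + W)).ncard := T.set_ncard_biUnion_le _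
    _ ≤ ∑ _k ∈ T, 1 :=
        Finset.sum_le_sum fun k _ => (Set.ncard_le_one (hsub _).finite).2 (hsub _)
    _ = T.card := by simp

theorem UniformlyDiscrete.exists_ncard_union_translate_inter_le (hud : UniformlyDiscrete Δ)
    (hK : IsCompact K) : ∃ n : ℕ, ∀ t x : G, ((Δ ∪ ({t} + Δ)) ∩ ({x} + K)).Finite ∧
      ((Δ ∪ ({t} + Δ)) ∩ ({x} + K)).ncard ≤ n := by
  obtain ⟨m, hm⟩ := hud.exists_ncard_inter_translate_le hK
  refine ⟨m + m, fun t x => ?_⟩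
  rw [Set.union_inter_distrib_right, Set.singleton_add_inter_singleton_add]
  refine ⟨(hm x).1.union ((hm (x - t)).1.image _), (Set.ncard_union_le _ _).trans ?_⟩
  rw [Set.ncard_image_of_injective _ (add_right_injective t)]
  exact add_le_add (hm x).2 (hm (x - t)).2

end UniformlyDiscrete

namespace IsPositiveDefiniteFn

variable {G : Type*} [AddCommGroup G] {η : G → ℂ}

theorem exists_nonneg_map_zero_eq (hpd : IsPositiveDefiniteFn η) : ∃ r : ℝ, 0 ≤ r ∧ η 0 = r := by
  simpa using hpd 1 ![0] ![1]

theorem ofReal_re_map_zero (hpd : IsPositiveDefiniteFn η) : ((η 0).re : ℂ) = η 0 := by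
  obtain ⟨r, -, h⟩ := hpd.exists_nonneg_map_zero_eq
  simp [h]

theorem norm_map_zero (hpd : IsPositiveDefiniteFn η) : ‖η 0‖ = (η 0).re := by
  obtain ⟨r, hr, h⟩ := hpd.exists_nonneg_map_zero_eq
  simp [h, hr]

theorem re_map_zero_nonneg (hpd : IsPositiveDefiniteFn η) : 0 ≤ (η 0).re :=
  hpd.norm_map_zero ▸ norm_nonneg _

theorem map_neg (hpd : IsPositiveDefiniteFn η) (z : G) : η (-z) = conj (η z) := by
  obtain ⟨r, -, h1⟩ := hpd 2 ![0, z] ![1, 1]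
  obtain ⟨s, -, h2⟩ := hpd 2 ![0, z] ![1, Complex.I]
  simp only [Fin.sum_univ_two, Matrix.cons_val_zero, Matrix.cons_val_one, sub_self, zero_sub,
    sub_zero, map_one, one_mul, mul_one, Complex.conj_I] at h1 h2
  rw [← hpd.ofReal_re_map_zero] at h1 h2
  have him := congrArg Complex.im h1
  have hre := congrArg Complex.im h2
  simp at him hre
  apply Complex.ext <;> simp <;> linarith

theorem norm_le (hpd : IsPositiveDefiniteFn η) (z : G) : ‖η z‖ ≤ (η 0).re := by
  rcases eq_or_ne (η z) 0 with hz | hz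
  · simpa [hz] using hpd.re_map_zero_nonneg
  set a := ‖η z‖
  have ha : 0 < a := norm_pos_iff.2 hz
  obtain ⟨r, hr, he⟩ := hpd 2 ![0, z] ![(a : ℂ), -conj (η z)]
  simp only [Fin.sum_univ_two, Matrix.cons_val_zero, Matrix.cons_val_one, sub_self, zero_sub,
    sub_zero, _root_.map_neg, Complex.conj_ofReal, Complex.conj_conj] at he
  rw [← hpd.ofReal_re_map_zero, hpd.map_neg z] at he
  have hnorm : conj (η z) * η z = (a : ℂ) * a := by
    rw [mul_comm, Complex.mul_conj, Complex.normSq_eq_norm_sq]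
    push_cast
    ring
  -- the quadratic form at this vector is `2 a² (η 0 - a)`
  have hform : ((2 * a ^ 2 * (η 0).re - 2 * a ^ 3 : ℝ) : ℂ) = r := by
    rw [← he]
    push_cast
    linear_combination (2 * (a : ℂ) - ((η 0).re : ℂ)) * hnorm
  rw [Complex.ofReal_inj] at hform
  nlinarith [pow_pos ha 2]

theorem norm_sub_sq_le_re (hpd : IsPositiveDefiniteFn η) (s t : G) :
    ‖η s - η t‖ ^ 2 ≤ 2 * (η 0).re * ((η 0).re - (η (s - t)).re) := by
  set φ := (η 0).re
  have hre : (η (s - t)).re ≤ φ := (Complex.re_le_norm _).trans (hpd.norm_le _)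
  rcases eq_or_ne (η s - η t) 0 with hd | hd
  · have : 0 ≤ φ := hpd.re_map_zero_nonneg
    rw [hd, norm_zero]
    nlinarith
  have hφ : 0 < φ := by
    by_contra! hφ
    have hs := norm_le_zero_iff.1 ((hpd.norm_le s).trans hφ)
    have ht := norm_le_zero_iff.1 ((hpd.norm_le t).trans hφ)
    exact hd (by rw [hs, ht, sub_zero])
  set A := ‖η s - η t‖ ^ 2
  have hA : 0 < A := by positivity
  obtain ⟨r, hr, he⟩ := hpd 3 ![0, s, t]
    ![(A : ℂ), -((φ : ℂ) * conj (η s - η t)), (φ : ℂ) * conj (η s - η t)]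
  simp only [Fin.sum_univ_three, Matrix.cons_val_zero, Matrix.cons_val_one, Matrix.cons_val_two,
    Matrix.tail_cons, Matrix.head_cons, sub_self, zero_sub, sub_zero, _root_.map_neg, map_mul,
    map_sub, Complex.conj_ofReal, Complex.conj_conj] at he
  rw [← hpd.ofReal_re_map_zero, hpd.map_neg s, hpd.map_neg t, ← neg_sub s t,
    hpd.map_neg (s - t)] at he
  have hnorm : (conj (η s) - conj (η t)) * (η s - η t) = (A : ℂ) := by
    rw [← map_sub, mul_comm, Complex.mul_conj, Complex.normSq_eq_norm_sq]
  have hsum : η (s - t) + conj (η (s - t)) = 2 * ((η (s - t)).re : ℂ) := by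
    rw [Complex.add_conj]
    push_cast
    ring
  -- the quadratic form at this vector is `φ A (2 φ (φ - Re η(s - t)) - A)`
  have hform : ((A ^ 2 * φ + 2 * A * φ ^ 3 - 2 * A ^ 2 * φ - 2 * A * φ ^ 2 * (η (s - t)).re : ℝ) :
      ℂ) = r := by
    rw [← he]
    push_cast
    linear_combination (2 * (A : ℂ) * φ + (φ : ℂ) ^ 2 * (η (s - t) + conj (η (s - t))) -
      2 * (φ : ℂ) ^ 3) * hnorm + ((φ : ℂ) ^ 2 * A) * hsum
  rw [Complex.ofReal_inj] at hform
  nlinarith [mul_pos hA hφ]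

theorem norm_sub_sq_le (hpd : IsPositiveDefiniteFn η) (s t : G) :
    ‖η s - η t‖ ^ 2 ≤ 2 * (η 0).re * ‖η 0 - η (s - t)‖ := by
  refine (hpd.norm_sub_sq_le_re s t).trans (mul_le_mul_of_nonneg_left ?_
    (mul_nonneg zero_le_two hpd.re_map_zero_nonneg))
  rw [← Complex.sub_re]
  exact Complex.re_le_norm _

end IsPositiveDefiniteFn

theorem acRho_nonneg {G : Type*} [AddCommGroup G] (η : G → ℂ) (s t : G) : 0 ≤ acRho η s t :=
  Real.sqrt_nonneg _

theorem sq_acRho_mul_norm {G : Type*} [AddCommGroup G] {η : G → ℂ} (hη0 : η 0 ≠ 0) (t : G) :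
    acRho η t 0 ^ 2 * ‖η 0‖ = ‖η 0 - η t‖ := by
  rw [acRho, sub_zero, Real.sq_sqrt (norm_nonneg _), ← norm_mul, sub_mul, one_mul,
    div_mul_cancel₀ _ hη0]

theorem IsPositiveDefiniteFn.norm_sub_translate_le {G : Type*} [AddCommGroup G] {η : G → ℂ}
    (hpd : IsPositiveDefiniteFn η) (hη0 : η 0 ≠ 0) (t z : G) :
    ‖η (z - t) - η z‖ ≤ 2 * (η 0).re * acRho η t 0 := by
  have hsq := hpd.norm_sub_sq_le z (z - t)
  rw [sub_sub_cancel, ← sq_acRho_mul_norm hη0, hpd.norm_map_zero, norm_sub_rev] at hsq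
  have hbound : 0 ≤ 2 * (η 0).re * acRho η t 0 :=
    mul_nonneg (mul_nonneg zero_le_two hpd.re_map_zero_nonneg) (acRho_nonneg η t 0)
  refine (pow_le_pow_iff_left₀ (norm_nonneg _) hbound two_ne_zero).1 ?_
  nlinarith [sq_nonneg ((η 0).re * acRho η t 0)]

section autocorrKNorm

variable {G : Type*} [AddCommGroup G] [TopologicalSpace G] [IsTopologicalAddGroup G]
  {K : Set G} {η : G → ℂ}

theorem UniformlyDiscrete.exists_autocorrKNorm_le (hud : UniformlyDiscrete (support η))
    (hK : IsCompact K) : ∃ n : ℕ, ∀ (t : G) (b : ℝ), 0 ≤ b → (∀ z, ‖η (z - t) - η z‖ ≤ b) →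
      autocorrKNorm η K t ≤ n * b := by
  obtain ⟨n, hn⟩ := hud.exists_ncard_union_translate_inter_le hK
  exact ⟨n, fun t b hb hf => ciSup_le fun x =>
    (hn t x).1.tsum_le_mul_of_ncard_le (hn t x).2 hb fun z _ => hf z⟩

theorem UniformlyDiscrete.norm_sub_le_autocorrKNorm (hud : UniformlyDiscrete (support η))
    (hK : IsCompact K) (hK0 : (0 : G) ∈ K) (hη0 : η 0 ≠ 0) {t : G} {b : ℝ}
    (hb : ∀ z, ‖η (z - t) - η z‖ ≤ b) : ‖η 0 - η t‖ ≤ autocorrKNorm η K t := by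
  obtain ⟨n, hn⟩ := hud.exists_ncard_union_translate_inter_le hK
  have hmem : t ∈ (support η ∪ ({t} + support η)) ∩ ({t} + K) :=
    ⟨Or.inr (Set.mem_add.2 ⟨t, rfl, 0, hη0, add_zero t⟩),
      Set.mem_add.2 ⟨t, rfl, 0, hK0, add_zero t⟩⟩
  have hbdd : BddAbove (Set.range fun x : G =>
      ∑' z : ↥((support η ∪ ({t} + support η)) ∩ ({x} + K)), ‖η (z - t) - η z‖) :=
    ⟨n * b, Set.forall_mem_range.2 fun x => (hn t x).1.tsum_le_mul_of_ncard_le (hn t x).2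
      ((norm_nonneg (η (0 - t) - η 0)).trans (hb 0)) fun z _ => hb z⟩
  calc ‖η 0 - η t‖ = ‖η (t - t) - η t‖ := by rw [sub_self]
    _ ≤ ∑' z : ↥((support η ∪ ({t} + support η)) ∩ ({t} + K)), ‖η (z - t) - η z‖ :=
        ((hn t t).1.summable fun z => ‖η (z - t) - η z‖).le_tsum ⟨t, hmem⟩
          fun _ _ => norm_nonneg _
    _ ≤ autocorrKNorm η K t := le_ciSup hbdd t

theorem IsPositiveDefiniteFn.sq_acRho_mul_le_autocorrKNorm (hpd : IsPositiveDefiniteFn η)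
    (hη0 : η 0 ≠ 0) (hud : UniformlyDiscrete (support η)) (hK : IsCompact K) (hK0 : (0 : G) ∈ K)
    (t : G) : acRho η t 0 ^ 2 * (η 0).re ≤ autocorrKNorm η K t := by
  rw [← hpd.norm_map_zero, sq_acRho_mul_norm hη0]
  exact hud.norm_sub_le_autocorrKNorm hK hK0 hη0 (hpd.norm_sub_translate_le hη0 t)

theorem IsPositiveDefiniteFn.exists_autocorrKNorm_le_mul_acRho (hpd : IsPositiveDefiniteFn η)
    (hη0 : η 0 ≠ 0) (hud : UniformlyDiscrete (support η)) (hK : IsCompact K) :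
    ∃ c : ℝ, 0 ≤ c ∧ ∀ t, autocorrKNorm η K t ≤ c * acRho η t 0 := by
  obtain ⟨n, hn⟩ := hud.exists_autocorrKNorm_le hK
  have hφ : 0 ≤ 2 * (η 0).re := mul_nonneg zero_le_two hpd.re_map_zero_nonneg
  refine ⟨n * (2 * (η 0).re), mul_nonneg n.cast_nonneg hφ, fun t => ?_⟩
  rw [mul_assoc]
  exact hn t _ (mul_nonneg hφ (acRho_nonneg η t 0)) (hpd.norm_sub_translate_le hη0 t)

end autocorrKNorm

theorem norm_almost_periodic_iff_almostPeriods_relativelyDense_general {G : Type*} [AddCommGroup G]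
    [TopologicalSpace G] [IsTopologicalAddGroup G]
    (K : Set G) (hK : IsCompact K) (hK0 : K ∈ nhds (0 : G))
    (η : G → ℂ) (hpd : IsPositiveDefiniteFn η) (hη0 : 0 < (η 0).re)
    (hud : UniformlyDiscrete {z : G | η z ≠ 0}) :
    (∀ ε : ℝ, 0 < ε → RelativelyDense {t : G | autocorrKNorm η K t < ε}) ↔
    (∀ ε : ℝ, 0 < ε → RelativelyDense (almostPeriods η ε)) := by
  have hη0' : η 0 ≠ 0 := fun h => hη0.ne' (by simp [h])
  obtain ⟨c, hc, hNc⟩ := hpd.exists_autocorrKNorm_le_mul_acRho hη0' hud hK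
  constructor
  · intro hN ε hε
    refine (hN (ε ^ 2 * (η 0).re) (by positivity)).mono fun t (ht : autocorrKNorm η K t < _) => ?_
    have := (hpd.sq_acRho_mul_le_autocorrKNorm hη0' hud hK (mem_of_mem_nhds hK0) t).trans_lt ht
    exact lt_of_pow_lt_pow_left₀ 2 hε.le (lt_of_mul_lt_mul_right this hη0.le)
  · intro hP ε hε
    refine (hP (ε / (c + 1)) (by positivity)).mono fun t (ht : acRho η t 0 < _) => ?_
    calc autocorrKNorm η K t ≤ c * acRho η t 0 := hNc t
      _ ≤ c * (ε / (c + 1)) := by gcongr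
      _ < ε := by
        rw [mul_div_assoc', div_lt_iff₀ (by positivity)]
        linarith

/-- For a positive definite `η` with `η(0) > 0` and uniformly discrete support, the
autocorrelation `γ = ∑_{z ∈ Δ} η(z) δ_z` is norm almost periodic if and only if all the sets
`P_ε` of `ε`-almost periods are relatively dense. -/
theorem norm_almost_periodic_iff_almostPeriods_relativelyDense {G : Type*} [AddCommGroup G]
    [TopologicalSpace G] [IsTopologicalAddGroup G] [LocallyCompactSpace G] [T2Space G]
    (K : Set G) (hK : IsCompact K) (hK0 : K ∈ nhds (0 : G))
    (η : G → ℂ) (hpd : IsPositiveDefiniteFn η) (hη0 : 0 < (η 0).re)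
    (hud : UniformlyDiscrete {z : G | η z ≠ 0}) :
    (∀ ε : ℝ, 0 < ε → RelativelyDense {t : G | autocorrKNorm η K t < ε}) ↔
    (∀ ε : ℝ, 0 < ε → RelativelyDense (almostPeriods η ε)) :=
  norm_almost_periodic_iff_almostPeriods_relativelyDense_general K hK hK0 η hpd hη0 hud
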